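/- arXiv:1101.5783 — 3 statements merged into one kernel-verified Lean document; each statement's English description precedes it below -/
import Mathlib

section
/- For the optimal weight vector w*_i = (1/k)[1 + d/2 - (d/(2 k^{2/d}))·α_i] (i = 1,...,k, zero otherwise), the sum of squares satisfies k·∑_{i=1}^k (w*_i)^2 → 2(d+2)/(d+4) as k → ∞. -/
/-!
Put `c = 1 + 2/d` and `α_i = i^c - (i-1)^c`. The `α_i` telescope to `k^c`, so after expanding the
square, `k ∑ (w*_i)^2 = A^2 - A d + (d^2/4) ∑ α_i^2 / k^(2c-1)` with `A = 1 + d/2`. By the mean value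
theorem `α_i` lies between `c (i-1)^(c-1)` and `c i^(c-1)`; comparing `j^r` with the increments of
`j^(1+r)` in the same way gives `∑_{j<k} j^r = k^(1+r)/(1+r) + O(k^r)`. Hence
`∑ α_i^2 / k^(2c-1) → c^2/(2c-1)`, and the constants combine to `2(d+2)/(d+4)`.
-/

open Filter Finset Real Topology

theorem Finset.sum_Icc_one_eq_sum_range {M : Type*} [AddCommMonoid M] (f : ℕ → M) (k : ℕ) :
    ∑ i ∈ Icc 1 k, f i = ∑ j ∈ range k, f (j + 1) := by
  rw [range_eq_Ico, sum_Ico_add' f 0 k 1]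
  rfl

section PowerIncrements

variable {r : ℝ}

theorem add_one_rpow_sub_rpow_mem_Icc (hr : 0 ≤ r) {x : ℝ} (hx : 0 ≤ x) :
    (x + 1) ^ (1 + r) - x ^ (1 + r) ∈ Set.Icc ((1 + r) * x ^ r) ((1 + r) * (x + 1) ^ r) := by
  have hderiv (y : ℝ) : HasDerivAt (· ^ (1 + r)) ((1 + r) * y ^ r) y := by
    simpa using hasDerivAt_rpow_const (x := y) (p := 1 + r) (Or.inr (by linarith))
  obtain ⟨ξ, ⟨hxξ, hξx⟩, hslope⟩ := exists_hasDerivAt_eq_slope _ _ (lt_add_one x)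
    (fun y _ => (hderiv y).continuousAt.continuousWithinAt) (fun y _ => hderiv y)
  rw [add_sub_cancel_left, div_one] at hslope
  rw [← hslope]
  exact ⟨by gcongr, by gcongr; linarith⟩

theorem sq_add_one_rpow_sub_rpow_mem_Icc (hr : 0 ≤ r) {x : ℝ} (hx : 0 ≤ x) :
    ((x + 1) ^ (1 + r) - x ^ (1 + r)) ^ 2 ∈
      Set.Icc ((1 + r) ^ 2 * x ^ (2 * r)) ((1 + r) ^ 2 * (x + 1) ^ (2 * r)) := by
  obtain ⟨hlo, hhi⟩ := add_one_rpow_sub_rpow_mem_Icc hr hx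
  rw [mul_comm 2 r, rpow_mul hx, rpow_mul (by linarith), rpow_two, rpow_two, ← mul_pow, ← mul_pow]
  have h0 : 0 ≤ (1 + r) * x ^ r := mul_nonneg (by linarith) (rpow_nonneg hx r)
  exact ⟨pow_le_pow_left₀ h0 hlo 2, pow_le_pow_left₀ (h0.trans hlo) hhi 2⟩

theorem sum_range_add_one_rpow_sub_rpow {p : ℝ} (hp : p ≠ 0) (k : ℕ) :
    ∑ j ∈ range k, (((j : ℝ) + 1) ^ p - (j : ℝ) ^ p) = (k : ℝ) ^ p := by
  simpa [zero_rpow hp] using sum_range_sub (fun j : ℕ => (j : ℝ) ^ p) k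

theorem one_add_mul_sum_range_rpow_le (hr : 0 ≤ r) (k : ℕ) :
    (1 + r) * ∑ j ∈ range k, (j : ℝ) ^ r ≤ (k : ℝ) ^ (1 + r) := by
  rw [← sum_range_add_one_rpow_sub_rpow (by linarith) k, mul_sum]
  exact sum_le_sum fun j _ => (add_one_rpow_sub_rpow_mem_Icc hr j.cast_nonneg).1

theorem rpow_le_one_add_mul_sum_range_add_one_rpow (hr : 0 ≤ r) (k : ℕ) :
    (k : ℝ) ^ (1 + r) ≤ (1 + r) * ∑ j ∈ range k, ((j : ℝ) + 1) ^ r := by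
  rw [← sum_range_add_one_rpow_sub_rpow (by linarith) k, mul_sum]
  exact sum_le_sum fun j _ => (add_one_rpow_sub_rpow_mem_Icc hr j.cast_nonneg).2

theorem sum_range_add_one_rpow_le (k : ℕ) :
    ∑ j ∈ range k, ((j : ℝ) + 1) ^ r ≤ ∑ j ∈ range k, (j : ℝ) ^ r + (k : ℝ) ^ r := by
  have h := sum_range_sub (fun j : ℕ => (j : ℝ) ^ r) k
  push_cast at h
  rw [sum_sub_distrib] at h
  have : (0 : ℝ) ≤ 0 ^ r := rpow_nonneg le_rfl r
  linarith

theorem sum_range_bounds_of_rpow_bounds {a : ℝ} (hr : 0 ≤ r) (ha : 0 ≤ a) {u : ℕ → ℝ}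
    (hlow : ∀ j : ℕ, a * (j : ℝ) ^ r ≤ u j) (hupp : ∀ j : ℕ, u j ≤ a * ((j : ℝ) + 1) ^ r)
    (k : ℕ) :
    a * ((k : ℝ) ^ (1 + r) / (1 + r) - (k : ℝ) ^ r) ≤ ∑ j ∈ range k, u j ∧
      ∑ j ∈ range k, u j ≤ a * ((k : ℝ) ^ (1 + r) / (1 + r) + (k : ℝ) ^ r) := by
  have hr1 : 0 < 1 + r := by linarith
  have hS := (le_div_iff₀' hr1).2 (one_add_mul_sum_range_rpow_le hr k)
  have hT := (div_le_iff₀' hr1).2 (rpow_le_one_add_mul_sum_range_add_one_rpow hr k)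
  have hST := sum_range_add_one_rpow_le (r := r) k
  constructor
  · calc a * ((k : ℝ) ^ (1 + r) / (1 + r) - (k : ℝ) ^ r)
        ≤ a * ∑ j ∈ range k, (j : ℝ) ^ r := by gcongr; linarith
      _ ≤ ∑ j ∈ range k, u j := by rw [mul_sum]; exact sum_le_sum fun j _ => hlow j
  · calc ∑ j ∈ range k, u j ≤ a * ∑ j ∈ range k, ((j : ℝ) + 1) ^ r := by
          rw [mul_sum]; exact sum_le_sum fun j _ => hupp j
      _ ≤ a * ((k : ℝ) ^ (1 + r) / (1 + r) + (k : ℝ) ^ r) := by gcongr; linarith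

theorem tendsto_sum_range_div_rpow_of_rpow_bounds {a : ℝ} (hr : 0 ≤ r) (ha : 0 ≤ a)
    {u : ℕ → ℝ} (hlow : ∀ j : ℕ, a * (j : ℝ) ^ r ≤ u j)
    (hupp : ∀ j : ℕ, u j ≤ a * ((j : ℝ) + 1) ^ r) :
    Tendsto (fun k : ℕ => (∑ j ∈ range k, u j) / (k : ℝ) ^ (1 + r)) atTop (𝓝 (a / (1 + r))) := by
  have herr : Tendsto (fun k : ℕ => a / (k : ℝ)) atTop (𝓝 0) :=
    tendsto_const_nhds.div_atTop tendsto_natCast_atTop_atTop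
  refine tendsto_of_tendsto_of_tendsto_of_le_of_le'
    (by simpa using (tendsto_const_nhds (x := a / (1 + r))).sub herr)
    (by simpa using (tendsto_const_nhds (x := a / (1 + r))).add herr) ?_ ?_
  all_goals
    filter_upwards [eventually_gt_atTop 0] with k hk
    obtain ⟨hlo, hhi⟩ := sum_range_bounds_of_rpow_bounds hr ha hlow hupp k
    have hk' : (0 : ℝ) < k := by exact_mod_cast hk
    have hkr : (k : ℝ) ^ (1 + r) = k * (k : ℝ) ^ r := by rw [rpow_add hk', rpow_one]
    rw [hkr] at hlo hhi ⊢
  · rw [le_div_iff₀ (by positivity)]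
    have : (a / (1 + r) - a / k) * (k * (k : ℝ) ^ r) =
        a * (k * (k : ℝ) ^ r / (1 + r) - (k : ℝ) ^ r) := by
      field_simp
    linarith
  · rw [div_le_iff₀ (by positivity)]
    have : (a / (1 + r) + a / k) * (k * (k : ℝ) ^ r) =
        a * (k * (k : ℝ) ^ r / (1 + r) + (k : ℝ) ^ r) := by
      field_simp
    linarith

theorem tendsto_sum_range_sq_add_one_rpow_sub_rpow_div (hr : 0 ≤ r) :
    Tendsto (fun k : ℕ => (∑ j ∈ range k, (((j : ℝ) + 1) ^ (1 + r) - (j : ℝ) ^ (1 + r)) ^ 2) /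
      (k : ℝ) ^ (1 + 2 * r)) atTop (𝓝 ((1 + r) ^ 2 / (1 + 2 * r))) :=
  tendsto_sum_range_div_rpow_of_rpow_bounds (by positivity) (by positivity)
    (fun j => (sq_add_one_rpow_sub_rpow_mem_Icc hr j.cast_nonneg).1)
    (fun j => (sq_add_one_rpow_sub_rpow_mem_Icc hr j.cast_nonneg).2)

end PowerIncrements

theorem mul_sum_sq_weights_eq {d e : ℝ} (he : 0 ≤ e) {k : ℕ} (hk : 0 < k) :
    (k : ℝ) * ∑ j ∈ range k, ((1 / (k : ℝ)) * (1 + d / 2 -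
      (d / (2 * (k : ℝ) ^ e)) * (((j : ℝ) + 1) ^ (1 + e) - (j : ℝ) ^ (1 + e)))) ^ 2 =
      (1 + d / 2) ^ 2 - (1 + d / 2) * d + d ^ 2 / 4 *
        ((∑ j ∈ range k, (((j : ℝ) + 1) ^ (1 + e) - (j : ℝ) ^ (1 + e)) ^ 2) /
          (k : ℝ) ^ (1 + 2 * e)) := by
  have hk' : (0 : ℝ) < k := by exact_mod_cast hk
  have hke : (0 : ℝ) < (k : ℝ) ^ e := rpow_pos_of_pos hk' e
  have hlin := sum_range_add_one_rpow_sub_rpow (p := 1 + e) (by linarith) k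
  rw [rpow_add hk', rpow_one] at hlin
  rw [rpow_add hk', rpow_one, mul_comm 2 e, rpow_mul hk'.le, rpow_two]
  simp only [mul_pow, sub_sq, sum_add_distrib, sum_sub_distrib, ← mul_sum, sum_const,
    card_range, nsmul_eq_mul, hlin]
  field_simp
  ring

theorem opt_weights_sum_sq_limit (d : ℕ) (hd : 0 < d) :
    Tendsto (fun k : ℕ =>
      (k : ℝ) * ∑ i ∈ Finset.Icc 1 k,
        ((1 / (k : ℝ)) * (1 + (d : ℝ) / 2 -
          ((d : ℝ) / (2 * (k : ℝ) ^ (2 / (d : ℝ)))) *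
            ((i : ℝ) ^ (1 + 2 / (d : ℝ)) - ((i : ℝ) - 1) ^ (1 + 2 / (d : ℝ))))) ^ 2)
      atTop (nhds (2 * ((d : ℝ) + 2) / ((d : ℝ) + 4))) := by
  have hd' : (0 : ℝ) < d := by exact_mod_cast hd
  have hval : (1 + (d : ℝ) / 2) ^ 2 - (1 + (d : ℝ) / 2) * d +
      (d : ℝ) ^ 2 / 4 * ((1 + 2 / (d : ℝ)) ^ 2 / (1 + 2 * (2 / (d : ℝ)))) =
      2 * ((d : ℝ) + 2) / ((d : ℝ) + 4) := by
    field_simp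
    ring
  have hlim := ((tendsto_sum_range_sq_add_one_rpow_sub_rpow_div (r := 2 / (d : ℝ))
    (by positivity)).const_mul ((d : ℝ) ^ 2 / 4)).const_add
      ((1 + (d : ℝ) / 2) ^ 2 - (1 + (d : ℝ) / 2) * d)
  rw [hval] at hlim
  refine hlim.congr' ?_
  filter_upwards [eventually_gt_atTop 0] with k hk
  rw [sum_Icc_one_eq_sum_range, ← mul_sum_sq_weights_eq (by positivity) hk]
  push_cast
  simp only [add_sub_cancel_right]
end

section
/- The function f(d) = 4^{-d/(d+4)}·((2d+4)/(d+4))^{(2d+4)/(d+4)} satisfies f(d) < 1 for every integer d ≥ 1, and f(d) → 1 as d → ∞. -/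
/-!
Put `t = d / (d + 4) ∈ (0, 1)`, so that the ratio is `4 ^ (-t) * (1 + t) ^ (1 + t)`. Its logarithm
`(1 + t) log (1 + t) - t log 4` is negative because `x log x` is strictly convex and `1 + t` is the
convex combination `(1 - t) • 1 + t • 2`, where `x log x` takes the values `0` and `log 4`.
As `d → ∞`, `t → 1` and the ratio tends to `4⁻¹ * 2 ^ 2 = 1`.
-/

open Filter Real Topology

noncomputable def regretRatio (t : ℝ) : ℝ := (4 : ℝ) ^ (-t) * (1 + t) ^ (1 + t)

lemma one_add_mul_log_one_add_lt {t : ℝ} (h0 : 0 < t) (h1 : t < 1) :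
    (1 + t) * log (1 + t) < t * log 4 := by
  have hconv := strictConvexOn_mul_log.2 (Set.mem_Ici.2 zero_le_one)
    (Set.mem_Ici.2 zero_le_two) (by norm_num) (sub_pos.2 h1) h0 (sub_add_cancel 1 t)
  have hlog4 : log 4 = 2 * log 2 := by
    rw [show (4 : ℝ) = 2 ^ 2 by norm_num, log_pow, Nat.cast_ofNat]
  simp only [smul_eq_mul, log_one, mul_zero, mul_one] at hconv
  rw [show 1 - t + t * 2 = 1 + t by ring] at hconv
  rw [hlog4]
  linarith

lemma regretRatio_lt_one {t : ℝ} (h0 : 0 < t) (h1 : t < 1) : regretRatio t < 1 := by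
  have h1t : 0 < 1 + t := by linarith
  have hpos : 0 < regretRatio t := by unfold regretRatio; positivity
  rw [← log_neg_iff hpos, regretRatio, log_mul (by positivity) (by positivity),
    log_rpow four_pos, log_rpow h1t]
  linarith [one_add_mul_log_one_add_lt h0 h1]

lemma regretRatio_one : regretRatio 1 = 1 := by
  norm_num [regretRatio, rpow_neg_one]

lemma continuousAt_regretRatio_one : ContinuousAt regretRatio 1 := by
  unfold regretRatio
  exact (continuousAt_const.rpow continuousAt_id.neg (Or.inl four_ne_zero)).mul
    ((continuousAt_const.add continuousAt_id).rpow (continuousAt_const.add continuousAt_id)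
      (Or.inl (by norm_num)))

lemma regretRatio_natCast_div (d : ℕ) :
    regretRatio ((d : ℝ) / ((d : ℝ) + 4)) =
      (4 : ℝ) ^ (-(d : ℝ) / ((d : ℝ) + 4)) *
        ((2 * (d : ℝ) + 4) / ((d : ℝ) + 4)) ^ ((2 * (d : ℝ) + 4) / ((d : ℝ) + 4)) := by
  have hsum : 1 + (d : ℝ) / ((d : ℝ) + 4) = (2 * (d : ℝ) + 4) / ((d : ℝ) + 4) := by
    field_simp
    ring
  rw [regretRatio, hsum, neg_div]

theorem regret_ratio_lt_one_and_tendsto_one :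
    (∀ d : ℕ, 1 ≤ d →
      (4 : ℝ) ^ (-(d : ℝ) / ((d : ℝ) + 4)) *
        ((2 * (d : ℝ) + 4) / ((d : ℝ) + 4)) ^ ((2 * (d : ℝ) + 4) / ((d : ℝ) + 4)) < 1) ∧
    Tendsto (fun d : ℕ =>
      (4 : ℝ) ^ (-(d : ℝ) / ((d : ℝ) + 4)) *
        ((2 * (d : ℝ) + 4) / ((d : ℝ) + 4)) ^ ((2 * (d : ℝ) + 4) / ((d : ℝ) + 4)))
      atTop (nhds 1) := by
  simp only [← regretRatio_natCast_div]
  refine ⟨fun d hd => regretRatio_lt_one ?_ ?_, ?_⟩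
  · have : (0 : ℝ) < d := by exact_mod_cast hd
    positivity
  · rw [div_lt_one (by positivity)]
    linarith
  · rw [← regretRatio_one]
    exact continuousAt_regretRatio_one.tendsto.comp (tendsto_natCast_div_add_atTop 4)
end

section
/- The function g(d) = Γ(2+2/d)^{2d/(d+4)} / 2^{4/(d+4)} satisfies g(1) > 1, g(2) = 1, and g(d) < 1 for all integers d ≥ 3. -/
/-!
Put `t = 2 / d`. Since `2 / d * (2d / (d + 4)) = 4 / (d + 4)`, the ratio equals
`(Γ(2 + t) / 2 ^ t) ^ (2d / (d + 4))`, so it exceeds, equals or falls below `1` according as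
`Γ(2 + t)` does `2 ^ t`. For `d = 1, 2` this is `Γ(4) = 6 > 4` and `Γ(3) = 2`. For `d ≥ 3`,
`t ∈ (0, 1)`, and `log Γ(2 + t) < t log 2` because `log Γ` is convex, meets the chord
`y ↦ (y - 2) log 2` at `2` and `3`, and lies strictly below it at `5/2`:
`Γ(5/2) = 3√π/4 < √2` as `π < 32/9`.
-/

open Real Set

theorem ConvexOn.neg_of_mem_openSegment {E : Type*} [AddCommGroup E] [Module ℝ E] {s : Set E}
    {f : E → ℝ} (hf : ConvexOn ℝ s f) {p q x : E} (hp : p ∈ s) (hq : q ∈ s) (hfp : f p ≤ 0)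
    (hfq : f q < 0) (hx : x ∈ openSegment ℝ p q) : f x < 0 := by
  obtain ⟨α, β, hα, hβ, hαβ, rfl⟩ := hx
  calc f (α • p + β • q) ≤ α • f p + β • f q := hf.2 hp hq hα.le hβ.le hαβ
    _ < 0 := add_neg_of_nonpos_of_neg (smul_nonpos_of_nonneg_of_nonpos hα.le hfp)
      (smul_neg_of_pos_of_neg hβ hfq)

theorem ConvexOn.neg_of_mem_Ioo {s : Set ℝ} {f : ℝ → ℝ} (hf : ConvexOn ℝ s f) {a m b x : ℝ}
    (ha : a ∈ s) (hb : b ∈ s) (hm : m ∈ s) (hfa : f a ≤ 0) (hfb : f b ≤ 0) (hfm : f m < 0)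
    (hma : a < m) (hmb : m < b) (hx : x ∈ Ioo a b) : f x < 0 := by
  rcases lt_trichotomy x m with hxm | rfl | hmx
  · exact hf.neg_of_mem_openSegment ha hm hfa hfm (Ioo_subset_openSegment ⟨hx.1, hxm⟩)
  · exact hfm
  · exact hf.neg_of_mem_openSegment hb hm hfb hfm
      (openSegment_symm ℝ m b ▸ Ioo_subset_openSegment ⟨hmx, hx.2⟩)

theorem Real.Gamma_five_halves : Gamma (5 / 2) = 3 / 4 * √π := by
  rw [show (5 / 2 : ℝ) = 1 / 2 + 1 + 1 by norm_num, Gamma_add_one (by norm_num),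
    Gamma_add_one (by norm_num), Gamma_one_half_eq]
  ring

theorem Real.Gamma_five_halves_lt_sqrt_two : Gamma (5 / 2) < √2 := by
  rw [Gamma_five_halves, show (3 / 4 : ℝ) = √(9 / 16) by
    rw [show (9 / 16 : ℝ) = (3 / 4) ^ 2 by norm_num, sqrt_sq (by norm_num)], ← sqrt_mul (by norm_num)]
  exact sqrt_lt_sqrt (by positivity) (by linarith [pi_lt_d2])

theorem Real.convexOn_log_Gamma_sub_chord :
    ConvexOn ℝ (Ioi 0) (fun y ↦ log (Gamma y) - (y - 2) * log 2) := by
  refine (convexOn_log_Gamma.sub (((LinearMap.mulRight ℝ (log 2)).concaveOn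
    (convex_Ioi 0)).add_const (-2 * log 2))).congr fun y _ ↦ ?_
  simp only [Pi.sub_apply, Pi.add_apply, Function.comp_apply, LinearMap.mulRight_apply]
  ring

theorem Real.Gamma_two_add_lt_two_rpow {t : ℝ} (ht : t ∈ Ioo 0 1) : Gamma (2 + t) < 2 ^ t := by
  have hchord : log (Gamma (2 + t)) - (2 + t - 2) * log 2 < 0 := by
    refine convexOn_log_Gamma_sub_chord.neg_of_mem_Ioo (a := 2) (m := 5 / 2) (b := 3)
      (by norm_num) (by norm_num) (by norm_num) ?_ ?_ ?_ (by norm_num) (by norm_num)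
      ⟨by linarith [ht.1], by linarith [ht.2]⟩
    · simp
    · rw [show (3 : ℝ) = 2 + 1 by norm_num, Gamma_add_one two_ne_zero, Gamma_two]
      norm_num
    · have h := log_lt_log (Gamma_pos_of_pos (by norm_num)) Gamma_five_halves_lt_sqrt_two
      rw [log_sqrt zero_le_two] at h
      linarith
  rw [← log_lt_log_iff (Gamma_pos_of_pos (by linarith [ht.1])) (by positivity),
    log_rpow two_pos]
  linarith

theorem Real.Gamma_rpow_div_two_rpow_eq {d : ℝ} (hd : 0 < d) :
    Gamma (2 + 2 / d) ^ (2 * d / (d + 4)) / 2 ^ (4 / (d + 4)) =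
      (Gamma (2 + 2 / d) / 2 ^ (2 / d)) ^ (2 * d / (d + 4)) := by
  rw [div_rpow (Gamma_pos_of_pos (by positivity)).le (by positivity), ← rpow_mul zero_le_two]
  congr 2
  field_simp
  ring

theorem bagged_regret_ratio_values :
    (1 : ℝ) < Real.Gamma (2 + 2 / (1 : ℝ)) ^ (2 * (1 : ℝ) / ((1 : ℝ) + 4)) /
        (2 : ℝ) ^ (4 / ((1 : ℝ) + 4)) ∧
    Real.Gamma (2 + 2 / (2 : ℝ)) ^ (2 * (2 : ℝ) / ((2 : ℝ) + 4)) /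
        (2 : ℝ) ^ (4 / ((2 : ℝ) + 4)) = 1 ∧
    ∀ d : ℕ, 3 ≤ d →
      Real.Gamma (2 + 2 / (d : ℝ)) ^ (2 * (d : ℝ) / ((d : ℝ) + 4)) /
        (2 : ℝ) ^ (4 / ((d : ℝ) + 4)) < 1 := by
  refine ⟨?_, ?_, fun d hd ↦ ?_⟩
  · rw [Gamma_rpow_div_two_rpow_eq one_pos]
    norm_num
    exact one_lt_rpow (by norm_num) (by norm_num)
  · rw [Gamma_rpow_div_two_rpow_eq two_pos]
    norm_num
  · have hd3 : (3 : ℝ) ≤ d := by exact_mod_cast hd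
    have hd0 : (0 : ℝ) < d := by linarith
    rw [Gamma_rpow_div_two_rpow_eq hd0]
    refine rpow_lt_one (div_pos (Gamma_pos_of_pos (by positivity)) (by positivity)).le ?_
      (by positivity)
    refine (div_lt_one (by positivity)).2 (Gamma_two_add_lt_two_rpow ⟨by positivity, ?_⟩)
    rw [div_lt_one hd0]
    linarith
end
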